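/- arXiv:2007.11975 — 2 statements merged into one kernel-verified Lean document; each statement's English description precedes it below -/
import Mathlib

section
/- Let η_i = 2/(i+1) for i ∈ ℕ, i ≥ 1, and let C₁, C₂ > 0 be constants. Suppose a sequence (φ_i) of real numbers satisfies φ_i ≤ (1 - η_i)·φ_{i-1} + (η_i²·C₁)/2 + η_i·C₂ for all i ≥ 1. Then for all i ≥ 1, φ_i ≤ η_i·C₁ + C₂, i.e., φ_i ≤ 2C₁/(i+1) + C₂. -/
/-- Induction claim: if φ_i ≤ (1-η_i)φ_{i-1} + η_i²C₁/2 + η_iC₂ with η_i = 2/(i+1),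
then φ_i ≤ 2C₁/(i+1) + C₂ for all i ≥ 1. -/
theorem stmt_0 (φ : ℕ → ℝ) (C₁ C₂ : ℝ) (hC₁ : 0 < C₁) (hC₂ : 0 < C₂)
    (hrec : ∀ i : ℕ, 1 ≤ i →
      φ i ≤ (1 - 2 / ((i : ℝ) + 1)) * φ (i - 1)
        + (2 / ((i : ℝ) + 1)) ^ 2 * C₁ / 2 + (2 / ((i : ℝ) + 1)) * C₂) :
    ∀ i : ℕ, 1 ≤ i → φ i ≤ 2 * C₁ / ((i : ℝ) + 1) + C₂ := by
  intro i hi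
  induction i, hi using Nat.le_induction with
  | base =>
    have h := hrec 1 le_rfl
    norm_num at h ⊢
    linarith
  | succ n hn ih =>
    have h := hrec (n + 1) (by omega)
    simp only [Nat.add_sub_cancel] at h
    push_cast at h ⊢
    have hn1 : (1:ℝ) ≤ (n:ℝ) := by exact_mod_cast hn
    have hpos : (0:ℝ) < (n:ℝ) + 1 := by linarith
    have hpos2 : (0:ℝ) < (n:ℝ) + 2 := by linarith
    have hη : (0:ℝ) ≤ 1 - 2 / ((n:ℝ) + 1 + 1) := by
      rw [sub_nonneg, div_le_one (by linarith)]; linarith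
    have h2 : φ n ≤ 2 * C₁ / ((n:ℝ) + 1) + C₂ := ih
    have h3 : φ (n+1) ≤ (1 - 2 / ((n:ℝ) + 1 + 1)) * (2 * C₁ / ((n:ℝ) + 1) + C₂)
        + (2 / ((n:ℝ) + 1 + 1)) ^ 2 * C₁ / 2 + (2 / ((n:ℝ) + 1 + 1)) * C₂ := by
      have := mul_le_mul_of_nonneg_left h2 hη
      linarith
    refine h3.trans ?_
    have hne1 : ((n:ℝ)+1) ≠ 0 := by linarith
    have hne2 : ((n:ℝ)+1+1) ≠ 0 := by linarith
    have expand : (1 - 2/((n:ℝ)+1+1)) * (2*C₁/((n:ℝ)+1) + C₂) + (2/((n:ℝ)+1+1))^2*C₁/2 + 2/((n:ℝ)+1+1)*C₂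
        = (2*C₁*(((n:ℝ))*((n:ℝ)+2) + ((n:ℝ)+1)))/(((n:ℝ)+1)*((n:ℝ)+2)^2) + C₂ := by
      field_simp
      ring
    have expand2 : 2*C₁/((n:ℝ)+1+1) = 2*C₁*(((n:ℝ)+1)*((n:ℝ)+2))/(((n:ℝ)+1)*((n:ℝ)+2)^2) := by
      field_simp
      ring
    rw [expand, expand2]
    have hD : (0:ℝ) < ((n:ℝ)+1)*((n:ℝ)+2)^2 := by positivity
    have hnum : 2*C₁*(((n:ℝ))*((n:ℝ)+2) + ((n:ℝ)+1)) ≤ 2*C₁*(((n:ℝ)+1)*((n:ℝ)+2)) := by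
      nlinarith [hC₁.le]
    have := (div_le_div_iff_of_pos_right hD).mpr hnum
    linarith
end

section
/- Let ℓ : ℝ^d → ℝ be L-Lipschitz, δ > 0, and ℓ̂(y) = E_v[ℓ(y + δv)] with v uniform on the unit sphere. If ℓ̂ is differentiable with ∇ℓ̂(y) = E_v[(d/δ)ℓ(y + δv)v], then for all y, y′: ‖∇ℓ̂(y) - ∇ℓ̂(y′)‖ ≤ (dL/δ)·‖y - y′‖; i.e., ℓ̂ is (dL/δ)-smooth. -/
open MeasureTheory

/-- The sphere-smoothed ℓ̂ is (dL/δ)-smooth: its gradient, given by the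
Flaxman–Kalai–McMahan representation, is (dL/δ)-Lipschitz. -/
theorem stmt_11 {d : ℕ} (ℓ : EuclideanSpace ℝ (Fin d) → ℝ) (L δ : ℝ) (hδ : 0 < δ) (hL : 0 ≤ L)
    (hlip : ∀ x y, |ℓ x - ℓ y| ≤ L * ‖x - y‖)
    (μ : Measure (EuclideanSpace ℝ (Fin d))) [IsProbabilityMeasure μ]
    (hsphere : ∀ᵐ v ∂μ, ‖v‖ = 1)
    (hint : ∀ y, Integrable (fun v => ℓ (y + δ • v) • v) μ)
    (gradhat : EuclideanSpace ℝ (Fin d) → EuclideanSpace ℝ (Fin d))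
    (hgrad : ∀ y, gradhat y = ((d : ℝ) / δ) • ∫ v, ℓ (y + δ • v) • v ∂μ) :
    ∀ y y', ‖gradhat y - gradhat y'‖ ≤ (d : ℝ) * L / δ * ‖y - y'‖ := by
  intro y y'
  rw [hgrad, hgrad, ← smul_sub, ← integral_sub (hint y) (hint y')]
  have hbound : ∀ᵐ v ∂μ, ‖ℓ (y + δ • v) • v - ℓ (y' + δ • v) • v‖ ≤ L * ‖y - y'‖ := by
    filter_upwards [hsphere] with v hv
    rw [← sub_smul, norm_smul, hv, mul_one, Real.norm_eq_abs]
    calc |ℓ (y + δ • v) - ℓ (y' + δ • v)| ≤ L * ‖(y + δ • v) - (y' + δ • v)‖ := hlip _ _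
      _ = L * ‖y - y'‖ := by rw [add_sub_add_right_eq_sub]
  have hI : ‖∫ v, (ℓ (y + δ • v) • v - ℓ (y' + δ • v) • v) ∂μ‖ ≤ L * ‖y - y'‖ := by
    have := norm_integral_le_of_norm_le_const (μ := μ) hbound
    simpa using this
  rw [norm_smul, Real.norm_eq_abs, abs_of_nonneg (by positivity : (0:ℝ) ≤ (d:ℝ)/δ)]
  calc (d:ℝ)/δ * ‖∫ v, (ℓ (y + δ • v) • v - ℓ (y' + δ • v) • v) ∂μ‖
      ≤ (d:ℝ)/δ * (L * ‖y - y'‖) := by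
        apply mul_le_mul_of_nonneg_left hI (by positivity)
    _ = (d:ℝ) * L / δ * ‖y - y'‖ := by ring
end
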